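/- The preference-modality reduction axiom is valid: M,w ⊨ [A,a][≤_{j→k}]φ ↔ (Pre(a) → (⋀_{c >^A a} U[A,c]φ ∧ ⋀_{c ≅^A a} [≤_{j→k}][A,c]φ)), where the conjunctions range over actions c in the finite action set A with c strictly above a, respectively c equivalent to a, in the relation ≤^A_{j→k}. -/
import Mathlib


section
variable {W A : Type*}

def strictA (leA : A → A → Prop) (a b : A) : Prop := leA a b ∧ ¬ leA b a
def equivA (leA : A → A → Prop) (a b : A) : Prop := leA a b ∧ leA b a

def UpdW (Pre : A → W → Prop) : Type _ := {p : W × A // Pre p.2 p.1}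

def updLe (le : W → W → Prop) (leA : A → A → Prop) (Pre : A → W → Prop)
    (x y : UpdW Pre) : Prop :=
  strictA leA x.1.2 y.1.2 ∨ (equivA leA x.1.2 y.1.2 ∧ le x.1.1 y.1.1)

def DBox (Pre : A → W → Prop) (a : A) (φ : UpdW Pre → Prop) (w : W) : Prop :=
  ∀ h : Pre a w, φ ⟨(w, a), h⟩

/-- Preference-modality reduction axiom:
[A,a][≤]φ ↔ (Pre(a) → (⋀_{c >^A a} U[A,c]φ ∧ ⋀_{c ≅^A a} [≤][A,c]φ)). -/
theorem stmt12 [Fintype A] (le : W → W → Prop) (hrefl : Reflexive le)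
    (htrans : Transitive le) (leA : A → A → Prop)
    (hArefl : Reflexive leA) (hAtrans : Transitive leA)
    (Pre : A → W → Prop) (a : A) (φ : UpdW Pre → Prop) (w : W) :
    DBox Pre a (fun x => ∀ y : UpdW Pre, updLe le leA Pre x y → φ y) w ↔
      (Pre a w →
        ((∀ c : A, strictA leA a c → ∀ w' : W, DBox Pre c φ w') ∧
         (∀ c : A, equivA leA a c → ∀ w' : W, le w w' → DBox Pre c φ w'))) := by
  constructor
  · intro h hw
    refine ⟨fun c hc w' hc' => h hw ⟨(w',c), hc'⟩ (Or.inl hc),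
            fun c hc w' hle hc' => h hw ⟨(w',c), hc'⟩ (Or.inr ⟨hc, hle⟩)⟩
  · intro h hw y hy
    rcases hy with hs | ⟨he, hl⟩
    · exact (h hw).1 _ hs _ y.2
    · exact (h hw).2 _ he _ hl y.2

end
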